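/- arXiv:2111.06055 — 2 statements merged into one kernel-verified Lean document; each statement's English description precedes it below -/
import Mathlib

section
/- Suppose a dynamical system (X,f) with at least one periodic point is transitive and has the shadowing property. If X is not periodic, then the topological entropy of (X,f) is strictly positive: h_top(f) > 0. -/
open Filter Topology MeasureTheory
open scoped ENNReal NNReal

section TransDef

variable {X : Type*} [MetricSpace X]

/-- Topological transitivity. -/
def TopTransitive (f : X → X) : Prop :=
  ∀ U V : Set X, IsOpen U → IsOpen V → U.Nonempty → V.Nonempty →
    ∃ n : ℕ, 1 ≤ n ∧ (U ∩ f^[n] ⁻¹' V).Nonempty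

end TransDef

section Shadow

variable {X : Type*} [MetricSpace X]

/-- The shadowing property. -/
def Shadowing (f : X → X) : Prop :=
  ∀ ε > (0:ℝ), ∃ δ > (0:ℝ), ∀ x : ℕ → X,
    (∀ n, dist (x (n + 1)) (f (x n)) < δ) →
    ∃ y : X, ∀ n, dist (f^[n] y) (x n) < ε

end Shadow

section Minimal

variable {X : Type*} [MetricSpace X]

/-- A minimal set. -/
def MinimalSet (f : X → X) (S : Set X) : Prop :=
  S.Nonempty ∧ IsClosed S ∧ Set.MapsTo f S S ∧
    ∀ T : Set X, T ⊆ S → T.Nonempty → IsClosed T → Set.MapsTo f T T → T = S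

/-- A periodic set: the orbit of a periodic point. -/
def PeriodicSet (f : X → X) (S : Set X) : Prop :=
  ∃ x : X, (∃ p : ℕ, 0 < p ∧ f^[p] x = x) ∧ S = Set.range fun i : ℕ => f^[i] x

end Minimal

/-!
Take a periodic point `x` and a point `z` at distance `4ε` from the orbit of `x`, and let `δ` be
the shadowing constant of `ε`. Transitivity gives `δ`-chains from `x` to `z` and back; run before
or after a long enough stretch of the periodic orbit, this `δ`-loop yields two `δ`-loops at `x` of
a common length `L` that are `4ε` apart at some time. Each binary word of length `k` concatenates
these loops into a `δ`-pseudo-orbit, and the points shadowing them form an `(Lk, ε)`-separated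
set of `2 ^ k` points, so the entropy is at least `log 2 / L`.
-/

open Dynamics Uniformity

section Nets

variable {X : Type*} [PseudoMetricSpace X] {T : X → X} {F : Set X}

lemma card_le_netMaxcard_of_separated {ι : Type*} [Fintype ι] {r : ℝ} (hr : 0 < r) {n : ℕ}
    {y : ι → X} (hyF : ∀ i, y i ∈ F)
    (hsep : ∀ i j, i ≠ j → ∃ k < n, 2 * r ≤ dist (T^[k] (y i)) (T^[k] (y j))) :
    (Fintype.card ι : ℕ∞) ≤ netMaxcard T F {q | dist q.1 q.2 < r} n := by
  classical
  have hy : Function.Injective y := by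
    intro i j hij
    by_contra hne
    obtain ⟨k, -, hk⟩ := hsep i j hne
    rw [hij, dist_self] at hk
    linarith
  have hnet : IsDynNetIn T F {q | dist q.1 q.2 < r} n (Finset.univ.image y) := by
    refine ⟨by simpa [Set.range_subset_iff] using hyF, ?_⟩
    simp only [Finset.coe_image, Finset.coe_univ, Set.image_univ]
    rintro _ ⟨i, rfl⟩ _ ⟨j, rfl⟩ hij
    obtain ⟨k, hk, hfar⟩ := hsep i j (ne_of_apply_ne y hij)
    refine Set.disjoint_left.2 fun w hwi hwj ↦ ?_
    have hi : dist (T^[k] (y i)) (T^[k] w) < r := (mem_dynEntourage.1 hwi) k hk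
    have hj : dist (T^[k] (y j)) (T^[k] w) < r := (mem_dynEntourage.1 hwj) k hk
    linarith [dist_triangle_right (T^[k] (y i)) (T^[k] (y j)) (T^[k] w)]
  simpa [Finset.card_image_of_injective _ hy] using hnet.card_le_netMaxcard

lemma coverEntropy_pos_of_netMaxcard_growth {U : SetRel X X} (hU : U ∈ 𝓤 X) {L : ℕ}
    (hL : L ≠ 0) (hgrowth : ∀ k, 2 ^ k ≤ netMaxcard T F U (L * k)) :
    0 < coverEntropy T F := by
  have hmono : Monotone fun n ↦ (netMaxcard T F U n : ℝ≥0∞) :=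
    ENat.toENNReal_mono.comp (netMaxcard_monotone_time T F U)
  have hlog : ENNReal.log 2 ≤ L * netEntropyEntourage T F U := by
    rw [netEntropyEntourage, ← hmono.expGrowthSup_comp_mul hL, ← ExpGrowth.expGrowthSup_pow]
    refine ExpGrowth.expGrowthSup_monotone fun k ↦ ?_
    simpa using ENat.toENNReal_mono (hgrowth k)
  have hpos : 0 < netEntropyEntourage T F U := by
    by_contra! hle
    have : (L : EReal) * netEntropyEntourage T F U ≤ 0 :=
      EReal.mul_nonpos_iff.2 (Or.inl ⟨by positivity, hle⟩)
    have : (0 : EReal) < ENNReal.log 2 := ENNReal.zero_lt_log_iff.2 ENNReal.one_lt_two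
    order
  exact hpos.trans_le (netEntropyEntourage_le_coverEntropy T F hU)

end Nets

section Chains

variable {X : Type*}

def IsDeltaChain [Dist X] (f : X → X) (δ : ℝ) (n : ℕ) (c : ℕ → X) : Prop :=
  ∀ k < n, dist (c (k + 1)) (f (c k)) < δ

def chainAppend (c : ℕ → X) (m : ℕ) (d : ℕ → X) : ℕ → X :=
  fun k ↦ if k ≤ m then c k else d (k - m)

lemma chainAppend_of_le {c d : ℕ → X} {m k : ℕ} (hk : k ≤ m) : chainAppend c m d k = c k :=
  if_pos hk

lemma chainAppend_of_ge {c d : ℕ → X} {m k : ℕ} (hcd : c m = d 0) (hk : m ≤ k) :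
    chainAppend c m d k = d (k - m) := by
  rcases hk.eq_or_lt with rfl | hlt
  · rw [chainAppend_of_le le_rfl, hcd, Nat.sub_self]
  · exact if_neg hlt.not_ge

lemma chainAppend_add {c d : ℕ → X} {m : ℕ} (hcd : c m = d 0) (n : ℕ) :
    chainAppend c m d (m + n) = d n := by
  rw [chainAppend_of_ge hcd (Nat.le_add_right m n), Nat.add_sub_cancel_left]

variable [PseudoMetricSpace X] {f : X → X} {δ : ℝ}

lemma isDeltaChain_orbit (hδ : 0 < δ) (x : X) (n : ℕ) :
    IsDeltaChain f δ n fun k ↦ f^[k] x := by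
  intro k _
  simpa only [Function.iterate_succ_apply', dist_self] using hδ

lemma IsDeltaChain.append {c d : ℕ → X} {m n : ℕ} (hc : IsDeltaChain f δ m c)
    (hd : IsDeltaChain f δ n d) (hcd : c m = d 0) :
    IsDeltaChain f δ (m + n) (chainAppend c m d) := by
  intro k hk
  rcases lt_or_ge k m with hkm | hmk
  · rw [chainAppend_of_le hkm, chainAppend_of_le hkm.le]
    exact hc k hkm
  · rw [chainAppend_of_ge hcd hmk, chainAppend_of_ge hcd (by omega), Nat.sub_add_comm hmk]
    exact hd (k - m) (by omega)

end Chains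

/-- The point `w` whose orbit runs from near `u` to near `v` gives the chain
`u, f w, …, f^[n-1] w, v`; only its first and last jumps are not exact. -/
lemma TopTransitive.exists_deltaChain {X : Type*} [MetricSpace X] {f : X → X}
    (htrans : TopTransitive f) {δ : ℝ} (hδ : 0 < δ) (u v : X) (hfu : ContinuousAt f u) :
    ∃ n c, c 0 = u ∧ c n = v ∧ IsDeltaChain f δ n c := by
  obtain ⟨η, hη, hcont⟩ := Metric.continuousAt_iff.1 hfu (δ / 2) (half_pos hδ)
  set r := min η (δ / 2)
  have hr : 0 < r := lt_min hη (half_pos hδ)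
  obtain ⟨n, hn, w, hwu, hwv⟩ := htrans (Metric.ball u r) (Metric.ball v r) Metric.isOpen_ball
    Metric.isOpen_ball ⟨u, Metric.mem_ball_self hr⟩ ⟨v, Metric.mem_ball_self hr⟩
  set c : ℕ → X := fun k ↦ if k = 0 then u else if k = n then v else f^[k] w
  have hnext : ∀ k, k ≠ 0 → dist (c k) (f^[k] w) < δ / 2 := by
    intro k hk
    by_cases hkn : k = n
    · subst hkn
      simpa [c, hk, dist_comm] using hwv.trans_le (min_le_right η _)
    · simp [c, hk, hkn, half_pos hδ]
  have hprev : ∀ k < n, dist (f^[k + 1] w) (f (c k)) < δ / 2 := by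
    intro k hk
    by_cases hk0 : k = 0
    · subst hk0
      simpa [c] using hcont (Metric.mem_ball.1 hwu |>.trans_le (min_le_left _ _))
    · simp [c, hk0, hk.ne, Function.iterate_succ_apply', half_pos hδ]
  refine ⟨n, c, rfl, by simp [c, show n ≠ 0 by omega], fun k hk ↦ ?_⟩
  calc dist (c (k + 1)) (f (c k))
      ≤ dist (c (k + 1)) (f^[k + 1] w) + dist (f^[k + 1] w) (f (c k)) := dist_triangle _ _ _
    _ < δ / 2 + δ / 2 := add_lt_add (hnext _ k.succ_ne_zero) (hprev k hk)
    _ = δ := add_halves δ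

section Loops

variable {X : Type*} {α : Type*}

def loopConcat (c : α → ℕ → X) (L : ℕ) (ω : ℕ → α) : ℕ → X :=
  fun n ↦ c (ω (n / L)) (n % L)

variable {c : α → ℕ → X} {L : ℕ} {x : X}

lemma loopConcat_mul_add (ω : ℕ → α) {i r : ℕ} (hr : r < L) :
    loopConcat c L ω (L * i + r) = c (ω i) r := by
  have hL : 0 < L := by omega
  simp only [loopConcat, Nat.mul_add_div hL, Nat.div_eq_of_lt hr, add_zero, Nat.mul_add_mod,
    Nat.mod_eq_of_lt hr]

lemma loopConcat_succ (h0 : ∀ i, c i 0 = x) (hL : ∀ i, c i L = x) (ω : ℕ → α) (n : ℕ) :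
    loopConcat c L ω (n + 1) = c (ω (n / L)) (n % L + 1) := by
  rcases Nat.eq_zero_or_pos L with rfl | hL0
  · simp [loopConcat]
  have hdiv := Nat.div_add_mod n L
  rcases Nat.lt_or_ge (n % L + 1) L with hlt | hge
  · rw [← loopConcat_mul_add (c := c) ω hlt]
    congr 1
    omega
  · have heq : n % L + 1 = L := le_antisymm (Nat.mod_lt n hL0) hge
    rw [heq, hL, ← h0 (ω (n / L + 1)), ← loopConcat_mul_add (c := c) ω hL0]
    congr 1
    rw [mul_add, mul_one]
    omega

lemma isPseudoOrbit_loopConcat [PseudoMetricSpace X] {f : X → X} {δ : ℝ} (hL0 : 0 < L)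
    (h0 : ∀ i, c i 0 = x) (hL : ∀ i, c i L = x) (hc : ∀ i, IsDeltaChain f δ L (c i))
    (ω : ℕ → α) (n : ℕ) :
    dist (loopConcat c L ω (n + 1)) (f (loopConcat c L ω n)) < δ := by
  rw [loopConcat_succ h0 hL]
  exact hc _ _ (Nat.mod_lt n hL0)

end Loops

/-- Shadowing the `2 ^ k` concatenations of `k` loops chosen from two that are `4 ε` apart at
time `t` gives an `(L k, ε)`-separated set of size `2 ^ k`. -/
lemma coverEntropy_pos_of_separated_loops {X : Type*} [MetricSpace X] {f : X → X} {ε δ : ℝ}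
    (hε : 0 < ε)
    (hshad : ∀ x : ℕ → X, (∀ n, dist (x (n + 1)) (f (x n)) < δ) →
      ∃ y : X, ∀ n, dist (f^[n] y) (x n) < ε)
    {c : Bool → ℕ → X} {x : X} {L t : ℕ} (ht : t < L) (h0 : ∀ i, c i 0 = x)
    (hL : ∀ i, c i L = x) (hc : ∀ i, IsDeltaChain f δ L (c i))
    (hsep : 4 * ε ≤ dist (c false t) (c true t)) :
    0 < coverEntropy f Set.univ := by
  have hsep' : ∀ i j : Bool, i ≠ j → 4 * ε ≤ dist (c i t) (c j t) := by
    rintro (_ | _) (_ | _) hij <;> simp_all [dist_comm]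
  refine coverEntropy_pos_of_netMaxcard_growth (Metric.dist_mem_uniformity hε)
    (by omega : L ≠ 0) fun k ↦ ?_
  choose y hy using fun v : Fin k → Bool ↦ hshad _
    (isPseudoOrbit_loopConcat (by omega) h0 hL hc (Function.extend Fin.val v fun _ ↦ false))
  have hnet := card_le_netMaxcard_of_separated hε (T := f) (F := Set.univ) (n := L * k)
    (y := y) (fun _ ↦ Set.mem_univ _) fun v w hvw ↦ ?_
  · simpa using hnet
  obtain ⟨i, hi⟩ := Function.ne_iff.1 hvw
  have hti : L * i + t < L * k := by nlinarith [i.isLt]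
  refine ⟨L * i + t, hti, ?_⟩
  have hv := hy v (L * i + t)
  have hw := hy w (L * i + t)
  rw [loopConcat_mul_add _ ht, Fin.val_injective.extend_apply] at hv hw
  linarith [hsep' _ _ hi, dist_comm (c (v i) t) (f^[L * i + t] (y v)),
    dist_triangle4 (c (v i) t) (f^[L * i + t] (y v)) (f^[L * i + t] (y w)) (c (w i) t)]

lemma Function.IsPeriodicPt.finite_range_iterate {α : Type*} {f : α → α} {p : ℕ} {x : α}
    (hx : Function.IsPeriodicPt f p x) (hp : 0 < p) : (Set.range fun n ↦ f^[n] x).Finite :=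
  ((Set.finite_Iio p).image fun n ↦ f^[n] x).subset <| by
    rintro _ ⟨n, rfl⟩
    exact ⟨n % p, Nat.mod_lt n hp, hx.iterate_mod_apply n⟩

/-- The two loops are `ℓ` followed by a stretch of the orbit of `x`, and that stretch followed
by `ℓ`. -/
lemma exists_loops_of_isPeriodicPt {X : Type*} [PseudoMetricSpace X] {f : X → X} {δ : ℝ}
    (hδ : 0 < δ) {x : X} {p : ℕ} (hx : Function.IsPeriodicPt f p x) (hp : 0 < p)
    {ℓ : ℕ → X} {m : ℕ} (hℓ : IsDeltaChain f δ m ℓ) (hℓ0 : ℓ 0 = x) (hℓm : ℓ m = x)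
    {t : ℕ} (ht : t ≤ m) :
    ∃ (c : Bool → ℕ → X) (L : ℕ), t < L ∧ (∀ i, c i 0 = x) ∧ (∀ i, c i L = x) ∧
      (∀ i, IsDeltaChain f δ L (c i)) ∧ c false t = ℓ t ∧ c true t = f^[t] x := by
  set N := (t + 1) * p
  have htN : t < N := Nat.lt_of_succ_le (Nat.le_mul_of_pos_right _ hp)
  have hN : f^[N] x = x := hx.const_mul (t + 1)
  set o : ℕ → X := (f^[·] x)
  have horbit : IsDeltaChain f δ N o := isDeltaChain_orbit hδ x N
  refine ⟨fun i ↦ cond i (chainAppend o N ℓ) (chainAppend ℓ m o), m + N, by omega, ?_, ?_, ?_,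
    chainAppend_of_le (d := o) ht, chainAppend_of_le (d := ℓ) htN.le⟩
  · rintro (_ | _) <;> simp [chainAppend_of_le, o, hℓ0]
  · rintro (_ | _)
    · simpa [o, hN] using chainAppend_add (d := o) hℓm N
    · simpa [add_comm m, hℓm] using chainAppend_add (c := o) (hN.trans hℓ0.symm) m
  · rintro (_ | _)
    · exact hℓ.append horbit hℓm
    · simpa [add_comm] using horbit.append hℓ (hN.trans hℓ0.symm)

theorem entropy_pos_of_transitive_shadowing_general
    {X : Type*} [MetricSpace X]
    (f : X → X) (hf : Continuous f)
    (hper : ∃ x : X, ∃ p : ℕ, 0 < p ∧ f^[p] x = x)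
    (htrans : TopTransitive f) (hshadow : Shadowing f)
    (hnper : ¬ PeriodicSet f (Set.univ : Set X)) :
    0 < Dynamics.coverEntropy f (Set.univ : Set X) := by
  obtain ⟨x, p, hp, hx⟩ := hper
  set O := Set.range fun i ↦ f^[i] x
  obtain ⟨z, hz⟩ : ∃ z, z ∉ O := by
    by_contra! h
    exact hnper ⟨x, ⟨p, hp, hx⟩, (Set.eq_univ_of_forall h).symm⟩
  have hO : IsClosed O := (Function.IsPeriodicPt.finite_range_iterate hx hp).isClosed
  have hzO : 0 < Metric.infDist z O := (hO.notMem_iff_infDist_pos ⟨x, 0, rfl⟩).1 hz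
  obtain ⟨δ, hδ, hshad⟩ := hshadow (Metric.infDist z O / 4) (by positivity)
  obtain ⟨a, cA, hA0, hAa, hA⟩ := htrans.exists_deltaChain hδ x z hf.continuousAt
  obtain ⟨b, cB, hB0, hBb, hB⟩ := htrans.exists_deltaChain hδ z x hf.continuousAt
  have hAB : cA a = cB 0 := hAa.trans hB0.symm
  obtain ⟨c, L, ht, h0, hL, hc, hfalse, htrue⟩ := exists_loops_of_isPeriodicPt hδ hx hp
    (hA.append hB hAB) (by rw [chainAppend_of_le (Nat.zero_le a), hA0])
    (by rw [chainAppend_add hAB, hBb]) (Nat.le_add_right a b)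
  refine coverEntropy_pos_of_separated_loops (by positivity) hshad ht h0 hL hc ?_
  rw [hfalse, htrue, chainAppend_of_le le_rfl, hAa]
  have hfar : Metric.infDist z O ≤ dist z (f^[a] x) :=
    Metric.infDist_le_dist_of_mem (Set.mem_range_self a)
  linarith

theorem entropy_pos_of_transitive_shadowing
    {X : Type*} [MetricSpace X] [CompactSpace X] [Nontrivial X]
    (f : X → X) (hf : Continuous f)
    (hper : ∃ x : X, ∃ p : ℕ, 0 < p ∧ f^[p] x = x)
    (htrans : TopTransitive f) (hshadow : Shadowing f)
    (hnper : ¬ PeriodicSet f (Set.univ : Set X)) :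
    0 < Dynamics.coverEntropy f (Set.univ : Set X) :=
  entropy_pos_of_transitive_shadowing_general f hf hper htrans hshadow hnper
end

section
/- Consider the two-sided full shift ({0,1}^ℤ, σ) with the metric d₁(ω,γ) = max{1/(|n|+1) : n ∈ ℤ, ω_n ≠ γ_n} for ω ≠ γ and d₁(ω,ω) = 0. (1) If α ∈ 𝒜 satisfies limsup_{n→∞} α(n)/ln n < ∞, then there is no pair x,y ∈ {0,1}^ℤ that is α-DC1-scrambled. (2) If α ∈ 𝒜 satisfies liminf_{n→∞} α(n)/ln n = ∞, then there exists an uncountable set in {0,1}^ℤ in which every pair of distinct points is α-DC1-scrambled. -/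
/-!
If `x ≠ y` differ at coordinate `p`, then `d₁(σʲx, σʲy) ≥ 1 / ((j + 1)(|p| + 1))`, so the orbit
sums `∑_{j<i} d₁(σʲx, σʲy)` grow at least like `log i / (|p| + 1)`. When `α = O(log)` this exceeds
`α(i) t` for all large `i` once `t` is small, so `Φ*_{xy}(t, σ, α) = 0`.

For the converse, a set `s ⊆ ℕ` is encoded by a point that is constant on the blocks
`[A_k, (k + 2) A_k)`, with `A_{k+1} = 3 ^ ((k + 2) A_k)` and block `k` carrying the bit
`k.unpair.1 ∈ s`. Two different codes disagree on infinitely many whole blocks, and at the end of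
such a block the orbits have been `1`-apart for a fraction `(k + 1)/(k + 2)` of the time, so
`Φ_{xy}(1, σ) = 0`. All disagreements lie in `[0, (k + 2) A_k) ∪ [A_{k+1}, ∞)`, so up to time
`n = A_{k+1}` the orbit sums are `O(log n)`; when `α(n) / log n → ∞` they stay below `α(i) t` for
all `i ∈ (√n, n]`, so `Φ*_{xy}(t, σ, α) = 1`.
-/

open Filter Topology MeasureTheory
open scoped ENNReal NNReal

section Chaos

variable {X : Type*} [MetricSpace X]

/-- `Φ_{xy}^{(n)}(t,f)`: the fraction of times `0 ≤ i ≤ n-1` at which the orbits of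
`x` and `y` are `t`-close. -/
noncomputable def PhiN (f : X → X) (x y : X) (t : ℝ) (n : ℕ) : ℝ :=
  ((Finset.range n).filter (fun i => dist (f^[i] x) (f^[i] y) < t)).card / n

/-- `Φ_{xy}(t,f) = liminf_n Φ_{xy}^{(n)}(t,f)`. -/
noncomputable def PhiInf (f : X → X) (x y : X) (t : ℝ) : ℝ :=
  Filter.liminf (fun n => PhiN f x y t n) Filter.atTop

/-- `Φ*_{xy}(t,f) = limsup_n Φ_{xy}^{(n)}(t,f)`. -/
noncomputable def PhiSup (f : X → X) (x y : X) (t : ℝ) : ℝ :=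
  Filter.limsup (fun n => PhiN f x y t n) Filter.atTop

/-- `Φ_{xy}^{(n)}(t,f,α)`. -/
noncomputable def PhiNA (f : X → X) (x y : X) (t : ℝ) (α : ℕ → ℝ) (n : ℕ) : ℝ :=
  ((Finset.Icc 1 n).filter
    (fun i => ∑ j ∈ Finset.range i, dist (f^[j] x) (f^[j] y) < α i * t)).card / n

/-- `Φ*_{xy}(t,f,α) = limsup_n Φ_{xy}^{(n)}(t,f,α)`. -/
noncomputable def PhiSupA (f : X → X) (x y : X) (t : ℝ) (α : ℕ → ℝ) : ℝ :=
  Filter.limsup (fun n => PhiNA f x y t α n) Filter.atTop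

/-- The class `𝒜` of nondecreasing maps `α : ℕ → [0,∞)` with `α(n) → ∞` and `α(n)/n → 0`. -/
def MemA (α : ℕ → ℝ) : Prop :=
  Monotone α ∧ (∀ n, 0 ≤ α n) ∧ Tendsto α atTop atTop ∧
    Tendsto (fun n : ℕ => α n / n) atTop (nhds 0)

/-- A pair `x, y` is DC1-scrambled. -/
def DC1Scrambled (f : X → X) (x y : X) : Prop :=
  (∃ t₀ > (0:ℝ), PhiInf f x y t₀ = 0) ∧ ∀ t > (0:ℝ), PhiSup f x y t = 1

/-- A pair `x, y` is `α`-DC1-scrambled. -/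
def ADC1Scrambled (f : X → X) (α : ℕ → ℝ) (x y : X) : Prop :=
  (∃ t₀ > (0:ℝ), PhiInf f x y t₀ = 0) ∧ ∀ t > (0:ℝ), PhiSupA f x y t α = 1

/-- A set is 1-chaotic if it contains an uncountable DC1-scrambled set. -/
def OneChaotic (f : X → X) (Y : Set X) : Prop :=
  ∃ S : Set X, S ⊆ Y ∧ ¬ S.Countable ∧
    ∀ x ∈ S, ∀ y ∈ S, x ≠ y → DC1Scrambled f x y

/-- A set is strongly distributional chaotic if, for every `α ∈ 𝒜`, it contains an
uncountable `α`-DC1-scrambled set. -/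
def StronglyDistributionalChaotic (f : X → X) (Y : Set X) : Prop :=
  ∀ α : ℕ → ℝ, MemA α → ∃ S : Set X, S ⊆ Y ∧ ¬ S.Countable ∧
    ∀ x ∈ S, ∀ y ∈ S, x ≠ y → ADC1Scrambled f α x y

end Chaos

/-- The two-sided shift map on `{0,1}^ℤ`. -/
def shiftZ : (ℤ → Fin 2) → (ℤ → Fin 2) := fun ω k => ω (k + 1)

open Finset

section Frequencies

variable {X : Type*} [MetricSpace X] (f : X → X) (x y : X) (t : ℝ)

lemma PhiN_nonneg (n : ℕ) : 0 ≤ PhiN f x y t n := by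
  unfold PhiN; positivity

lemma PhiN_le_one (n : ℕ) : PhiN f x y t n ≤ 1 :=
  div_le_one_of_le₀ (by exact_mod_cast (card_filter_le _ _).trans (card_range n).le) n.cast_nonneg

lemma PhiNA_nonneg (α : ℕ → ℝ) (n : ℕ) : 0 ≤ PhiNA f x y t α n := by
  unfold PhiNA; positivity

lemma PhiNA_le_one (α : ℕ → ℝ) (n : ℕ) : PhiNA f x y t α n ≤ 1 :=
  div_le_one_of_le₀ (by exact_mod_cast (card_filter_le _ _).trans (by simp)) n.cast_nonneg

lemma PhiInf_self {t : ℝ} (ht : 0 < t) : PhiInf f x x t = 1 := by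
  refine Tendsto.liminf_eq (tendsto_const_nhds.congr' ?_)
  filter_upwards [eventually_gt_atTop 0] with n hn
  simp [PhiN, ht, hn.ne']

lemma PhiN_le_of_forall_Ico (a n : ℕ) (h : ∀ i ∈ Ico a n, t ≤ dist (f^[i] x) (f^[i] y)) :
    PhiN f x y t n ≤ a / n := by
  unfold PhiN
  gcongr
  calc _ ≤ #(range a) := card_le_card fun i hi => by
          simp only [mem_filter, mem_range] at hi ⊢
          by_contra! hai
          exact (h i (mem_Ico.2 ⟨hai, hi.1⟩)).not_gt hi.2
    _ = a := card_range a

lemma sub_div_le_PhiNA (α : ℕ → ℝ) (m n : ℕ)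
    (h : ∀ i ∈ Ioc m n, ∑ j ∈ range i, dist (f^[j] x) (f^[j] y) < α i * t) :
    ((n - m : ℕ) : ℝ) / n ≤ PhiNA f x y t α n := by
  unfold PhiNA
  gcongr
  rw [← Nat.card_Ioc]
  refine card_le_card fun i hi => mem_filter.2 ⟨?_, h i hi⟩
  simp only [mem_Ioc, mem_Icc] at hi ⊢
  omega

lemma PhiSupA_eq_zero_of_eventually_le (α : ℕ → ℝ)
    (h : ∀ᶠ i in atTop, α i * t ≤ ∑ j ∈ range i, dist (f^[j] x) (f^[j] y)) :
    PhiSupA f x y t α = 0 := by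
  obtain ⟨N, hN⟩ := eventually_atTop.1 h
  have hle : ∀ n, PhiNA f x y t α n ≤ N / n := fun n => by
    unfold PhiNA
    gcongr
    calc _ ≤ #(range N) := card_le_card fun i hi => by
            simp only [mem_filter, mem_range] at hi ⊢
            by_contra! hNi
            exact (hN i hNi).not_gt hi.2
      _ = N := card_range N
  exact Tendsto.limsup_eq <| squeeze_zero (PhiNA_nonneg f x y t α) hle
    (tendsto_const_div_atTop_nhds_zero_nat _)

lemma PhiInf_eq_zero_of_tendsto {u : ℕ → ℕ} (hu : Tendsto u atTop atTop)
    (h : Tendsto (fun k => PhiN f x y t (u k)) atTop (𝓝 0)) : PhiInf f x y t = 0 := by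
  refine le_antisymm (le_of_forall_pos_le_add fun ε hε => ?_) ?_
  · rw [zero_add]
    exact liminf_le_of_frequently_le (hu.frequently (h.eventually (ge_mem_nhds hε)).frequently)
      (isBoundedUnder_of ⟨0, PhiN_nonneg f x y t⟩)
  · exact le_liminf_of_le (isCoboundedUnder_ge_of_le _ (PhiN_le_one f x y t))
      (.of_forall (PhiN_nonneg f x y t))

lemma PhiSupA_eq_one_of_tendsto (α : ℕ → ℝ) {u : ℕ → ℕ} (hu : Tendsto u atTop atTop)
    (h : Tendsto (fun k => PhiNA f x y t α (u k)) atTop (𝓝 1)) : PhiSupA f x y t α = 1 := by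
  refine le_antisymm ?_ (le_of_forall_pos_le_add fun ε hε => ?_)
  · exact limsup_le_of_le (isCoboundedUnder_le_of_le _ (PhiNA_nonneg f x y t α))
      (.of_forall (PhiNA_le_one f x y t α))
  · rw [← sub_le_iff_le_add]
    exact le_limsup_of_frequently_le
      (hu.frequently (h.eventually (le_mem_nhds (sub_lt_self 1 hε))).frequently)
      (isBoundedUnder_of ⟨1, PhiNA_le_one f x y t α⟩)

end Frequencies

section SymbolicMetric

variable {A : Type*} [MetricSpace (ℤ → A)]
  (hdist : ∀ ω γ : ℤ → A, ω ≠ γ →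
    dist ω γ = sSup {r : ℝ | ∃ n : ℤ, ω n ≠ γ n ∧ r = 1 / (|(n : ℝ)| + 1)})
include hdist

lemma one_div_abs_add_one_le_dist {ω γ : ℤ → A} {n : ℤ} (h : ω n ≠ γ n) :
    1 / (|(n : ℝ)| + 1) ≤ dist ω γ := by
  rw [hdist ω γ fun e => h (congrFun e n)]
  refine le_csSup ⟨1, ?_⟩ ⟨n, h, rfl⟩
  rintro _ ⟨m, -, rfl⟩
  exact div_le_one_of_le₀ (le_add_of_nonneg_left (abs_nonneg _)) (by positivity)

lemma dist_le_of_forall_ne {ω γ : ℤ → A} {b : ℝ} (hb : 0 ≤ b)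
    (h : ∀ n, ω n ≠ γ n → 1 / (|(n : ℝ)| + 1) ≤ b) : dist ω γ ≤ b := by
  rcases eq_or_ne ω γ with rfl | hne
  · simpa using hb
  rw [hdist ω γ hne]
  exact Real.sSup_le (by rintro _ ⟨n, hn, rfl⟩; exact h n hn) hb

end SymbolicMetric

lemma shiftZ_iterate_apply (x : ℤ → Fin 2) (j : ℕ) (k : ℤ) : shiftZ^[j] x k = x (k + j) := by
  induction j generalizing x with
  | zero => simp
  | succ j ih =>
    rw [Function.iterate_succ_apply, ih, shiftZ]
    push_cast
    ring_nf

lemma cast_harmonic (n : ℕ) : (harmonic n : ℝ) = ∑ j ∈ range n, 1 / ((j : ℝ) + 1) := by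
  simp [harmonic]

lemma tendsto_nat_sqrt_atTop : Tendsto Nat.sqrt atTop atTop :=
  tendsto_atTop_atTop.2 fun b => ⟨b * b, fun _ hn => Nat.le_sqrt.2 hn⟩

lemma tendsto_sub_nat_sqrt_div_self :
    Tendsto (fun n : ℕ => ((n - Nat.sqrt n : ℕ) : ℝ) / n) atTop (𝓝 1) := by
  have hsmall : Tendsto (fun n : ℕ => (Nat.sqrt n : ℝ) / n) atTop (𝓝 0) := by
    refine squeeze_zero' (.of_forall fun n => by positivity) ?_
      ((tendsto_const_div_atTop_nhds_zero_nat 1).comp tendsto_nat_sqrt_atTop)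
    filter_upwards [tendsto_nat_sqrt_atTop.eventually_gt_atTop 0] with n hn
    have hsq : (Nat.sqrt n : ℝ) * Nat.sqrt n ≤ n := by exact_mod_cast Nat.sqrt_le n
    have hn' : (0 : ℝ) < n := by exact_mod_cast Nat.sqrt_pos.1 hn
    rw [Function.comp_apply, div_le_div_iff₀ (by positivity) (by positivity)]
    linarith
  have := (tendsto_const_nhds (x := (1 : ℝ))).sub hsmall
  rw [sub_zero] at this
  refine this.congr' ?_
  filter_upwards [eventually_gt_atTop 0] with n hn
  rw [Nat.cast_sub (Nat.sqrt_le_self n), sub_div, div_self (by positivity)]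

/-- The ratio `blockEnd k / blockStart k = k + 2` tends to infinity, while the exponential gap
`blockStart (k + 1) = 3 ^ blockEnd k` gives `blockEnd k ≤ log (blockStart (k + 1))`. -/
def blockStart : ℕ → ℕ
  | 0 => 1
  | k + 1 => 3 ^ ((k + 2) * blockStart k)

def blockEnd (k : ℕ) : ℕ := (k + 2) * blockStart k

lemma blockStart_succ (k : ℕ) : blockStart (k + 1) = 3 ^ blockEnd k := rfl

lemma blockStart_pos : ∀ k, 0 < blockStart k
  | 0 => one_pos
  | k + 1 => by rw [blockStart_succ]; positivity

lemma blockStart_lt_blockEnd (k : ℕ) : blockStart k < blockEnd k := by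
  have := blockStart_pos k
  unfold blockEnd
  nlinarith

lemma two_le_blockEnd (k : ℕ) : 2 ≤ blockEnd k :=
  Nat.le_mul_of_pos_right _ (blockStart_pos k) |>.trans' (by omega)

lemma blockEnd_lt_blockStart_succ (k : ℕ) : blockEnd k < blockStart (k + 1) :=
  Nat.lt_pow_self (by norm_num)

lemma blockStart_strictMono : StrictMono blockStart :=
  strictMono_nat_of_lt_succ fun k =>
    (blockStart_lt_blockEnd k).trans (blockEnd_lt_blockStart_succ k)

lemma blockEnd_strictMono : StrictMono blockEnd := fun k l h =>
  Nat.mul_lt_mul_of_lt_of_le (by omega) (blockStart_strictMono.monotone h.le) (blockStart_pos l)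

lemma blockEnd_le_blockStart {k l : ℕ} (h : k < l) : blockEnd k ≤ blockStart l :=
  (blockEnd_lt_blockStart_succ k).le.trans (blockStart_strictMono.monotone h)

lemma blockEnd_le_log_blockStart_succ (k : ℕ) :
    (blockEnd k : ℝ) ≤ Real.log (blockStart (k + 1)) := by
  rw [blockStart_succ, Nat.cast_pow, Real.log_pow]
  have : (1 : ℝ) ≤ Real.log 3 := by linarith [Real.log_three_gt_d9]
  exact le_mul_of_one_le_right (by positivity) this

def block (k : ℕ) : Set ℤ := Set.Ico (blockStart k : ℤ) (blockEnd k)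

lemma eq_of_mem_block {k l : ℕ} {m : ℤ} (hk : m ∈ block k) (hl : m ∈ block l) : k = l := by
  have disjoint : ∀ {k l}, k < l → m ∈ block k → m ∉ block l := fun {k l} h hk hl => by
    have : (blockEnd k : ℤ) ≤ blockStart l := by exact_mod_cast blockEnd_le_blockStart h
    simp only [block, Set.mem_Ico] at hk hl
    omega
  rcases lt_trichotomy k l with h | rfl | h
  · exact absurd hl (disjoint h hk)
  · rfl
  · exact absurd hk (disjoint h hl)

/-- Block `k` carries the bit `k.unpair.1 ∈ s`, so every bit of `s` is repeated on infinitely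
many blocks. -/
noncomputable def blockPoint (s : Set ℕ) (m : ℤ) : Fin 2 :=
  open Classical in if ∃ k, m ∈ block k ∧ k.unpair.1 ∈ s then 1 else 0

lemma blockPoint_ne_of_mem_block {s s' : Set ℕ} {k : ℕ} {m : ℤ} (hm : m ∈ block k)
    (hk : ¬(k.unpair.1 ∈ s ↔ k.unpair.1 ∈ s')) : blockPoint s m ≠ blockPoint s' m := by
  have key : ∀ s : Set ℕ, (∃ l, m ∈ block l ∧ l.unpair.1 ∈ s) ↔ k.unpair.1 ∈ s := fun s =>
    ⟨fun ⟨l, hl, hs⟩ => eq_of_mem_block hl hm ▸ hs, fun hs => ⟨k, hm, hs⟩⟩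
  unfold blockPoint
  rw [key, key]
  split_ifs <;> simp_all

lemma exists_mem_block_of_blockPoint_ne {s s' : Set ℕ} {m : ℤ}
    (h : blockPoint s m ≠ blockPoint s' m) : ∃ k, m ∈ block k := by
  by_contra! hm
  simp [blockPoint, hm] at h

lemma mem_Ico_or_le_of_blockPoint_ne {s s' : Set ℕ} {m : ℤ}
    (h : blockPoint s m ≠ blockPoint s' m) (k : ℕ) :
    m ∈ Set.Ico 0 (blockEnd k : ℤ) ∨ (blockStart (k + 1) : ℤ) ≤ m := by
  obtain ⟨l, hl⟩ := exists_mem_block_of_blockPoint_ne h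
  simp only [block, Set.mem_Ico] at hl ⊢
  rcases le_or_gt l k with hlk | hkl
  · have : (blockEnd l : ℤ) ≤ blockEnd k := by exact_mod_cast blockEnd_strictMono.monotone hlk
    omega
  · have : (blockStart (k + 1) : ℤ) ≤ blockStart l := by
      exact_mod_cast blockStart_strictMono.monotone hkl
    omega

lemma blockPoint_injective : Function.Injective blockPoint := by
  intro s s' h
  by_contra hne
  obtain ⟨i, hi⟩ : ∃ i, ¬(i ∈ s ↔ i ∈ s') := by simpa [Set.ext_iff] using hne
  have hm : (blockStart (Nat.pair i 0) : ℤ) ∈ block (Nat.pair i 0) := by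
    simpa [block] using blockStart_lt_blockEnd _
  exact blockPoint_ne_of_mem_block hm (by rwa [Nat.unpair_pair]) (congrFun h _)

lemma not_countable_range_blockPoint : ¬ (Set.range blockPoint).Countable := fun h =>
  have : Uncountable (Set ℕ) :=
    uncountable_iff_forall_not_surjective.2 fun _ => Function.cantor_surjective _
  Set.not_countable_univ (by simpa using h.preimage blockPoint_injective)

section ShiftMetric

variable [MetricSpace (ℤ → Fin 2)]
  (hdist : ∀ ω γ : ℤ → Fin 2, ω ≠ γ →
    dist ω γ = sSup {r : ℝ | ∃ n : ℤ, ω n ≠ γ n ∧ r = 1 / (|(n : ℝ)| + 1)})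
include hdist

lemma log_div_le_sum_dist_shiftZ {x y : ℤ → Fin 2} {p : ℤ} (hp : x p ≠ y p) (i : ℕ) :
    Real.log (i + 1) / (|(p : ℝ)| + 1) ≤
      ∑ j ∈ range i, dist (shiftZ^[j] x) (shiftZ^[j] y) := by
  have hterm : ∀ j ∈ range i,
      1 / ((j : ℝ) + 1) / (|(p : ℝ)| + 1) ≤ dist (shiftZ^[j] x) (shiftZ^[j] y) := by
    intro j _
    have hne : shiftZ^[j] x (p - j) ≠ shiftZ^[j] y (p - j) := by
      simpa [shiftZ_iterate_apply] using hp
    refine le_trans ?_ (one_div_abs_add_one_le_dist hdist hne)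
    rw [div_div]
    gcongr
    push_cast
    nlinarith [abs_sub (p : ℝ) j, abs_nonneg (p : ℝ),
      abs_of_nonneg (Nat.cast_nonneg j : (0 : ℝ) ≤ j),
      mul_nonneg (Nat.cast_nonneg j : (0 : ℝ) ≤ j) (abs_nonneg (p : ℝ))]
  calc Real.log (i + 1) / (|(p : ℝ)| + 1) ≤ harmonic i / (|(p : ℝ)| + 1) := by
        gcongr
        exact_mod_cast log_add_one_le_harmonic i
    _ = ∑ j ∈ range i, 1 / ((j : ℝ) + 1) / (|(p : ℝ)| + 1) := by rw [cast_harmonic, sum_div]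
    _ ≤ _ := sum_le_sum hterm

theorem not_ADC1Scrambled_shiftZ {α : ℕ → ℝ}
    (hbd : IsBoundedUnder (· ≤ ·) atTop fun n : ℕ => α n / Real.log n) (x y : ℤ → Fin 2) :
    ¬ ADC1Scrambled shiftZ α x y := by
  rintro ⟨⟨t₀, ht₀, hinf⟩, hsup⟩
  rcases eq_or_ne x y with rfl | hxy
  · simp [PhiInf_self shiftZ x ht₀] at hinf
  obtain ⟨p, hp⟩ := Function.ne_iff.1 hxy
  obtain ⟨M, hM⟩ := hbd
  set M' := max M 1
  set q := |(p : ℝ)| + 1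
  have hM' : 0 < M' := lt_max_of_lt_right one_pos
  have hzero : PhiSupA shiftZ x y (1 / (M' * q)) α = 0 := by
    refine PhiSupA_eq_zero_of_eventually_le _ _ _ _ _ ?_
    filter_upwards [eventually_map.1 hM, eventually_ge_atTop 2] with i hMi hi
    have hlog : 0 < Real.log i := Real.log_pos (by exact_mod_cast hi)
    calc α i * (1 / (M' * q)) = α i / M' / q := by rw [mul_one_div, div_div]
      _ ≤ Real.log i / q := by
          gcongr
          rw [div_le_iff₀' hM']
          exact (div_le_iff₀ hlog).1 (hMi.trans (le_max_left M 1))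
      _ ≤ Real.log (i + 1) / q := by gcongr; linarith
      _ ≤ _ := log_div_le_sum_dist_shiftZ hdist hp i
  rw [hsup _ (by positivity)] at hzero
  exact one_ne_zero hzero

section Disagreements

variable {x y : ℤ → Fin 2} {b n : ℕ} (hxy : ∀ m, x m ≠ y m → m ∈ Set.Ico 0 (b : ℤ) ∨ (n : ℤ) ≤ m)
include hxy

/-- For `j < b` the truncated subtraction `j - b = 0` makes the first term `1`. -/
lemma dist_shiftZ_iterate_le {j : ℕ} (hj : j < n) :
    dist (shiftZ^[j] x) (shiftZ^[j] y) ≤ 1 / (((j - b : ℕ) : ℝ) + 1) + 1 / ((n - j : ℕ) : ℝ) := by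
  have hnj : (0 : ℝ) < (n - j : ℕ) := by exact_mod_cast Nat.sub_pos_of_lt hj
  refine dist_le_of_forall_ne hdist (by positivity) fun r hr => ?_
  rw [shiftZ_iterate_apply, shiftZ_iterate_apply] at hr
  rcases hxy _ hr with ⟨-, hb⟩ | hn
  · have : ((j - b : ℕ) : ℤ) ≤ |r| := by rcases abs_cases r with ⟨h, h'⟩ | ⟨h, h'⟩ <;> omega
    have : ((j - b : ℕ) : ℝ) ≤ |(r : ℝ)| := by exact_mod_cast this
    calc 1 / (|(r : ℝ)| + 1) ≤ 1 / (((j - b : ℕ) : ℝ) + 1) := by gcongr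
      _ ≤ _ := le_add_of_nonneg_right (by positivity)
  · have : ((n - j : ℕ) : ℤ) ≤ |r| + 1 := by rw [abs_of_nonneg (by omega)]; omega
    have : ((n - j : ℕ) : ℝ) ≤ |(r : ℝ)| + 1 := by exact_mod_cast this
    calc 1 / (|(r : ℝ)| + 1) ≤ 1 / ((n - j : ℕ) : ℝ) := by gcongr
      _ ≤ _ := le_add_of_nonneg_left (by positivity)

lemma sum_dist_shiftZ_iterate_le {i : ℕ} (hi : i ≤ n) :
    ∑ j ∈ range i, dist (shiftZ^[j] x) (shiftZ^[j] y) ≤ b + 2 * harmonic n := by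
  have hleft : ∑ j ∈ range n, 1 / (((j - b : ℕ) : ℝ) + 1) ≤ b + harmonic n := by
    calc ∑ j ∈ range n, 1 / (((j - b : ℕ) : ℝ) + 1)
        ≤ ∑ j ∈ range (b + n), 1 / (((j - b : ℕ) : ℝ) + 1) :=
          sum_le_sum_of_subset_of_nonneg (range_subset_range.2 (by omega))
            fun _ _ _ => by positivity
      _ = b + harmonic n := by
          rw [sum_range_add, cast_harmonic]
          congr 1
          · rw [sum_congr rfl fun j hj => by rw [Nat.sub_eq_zero_of_le (mem_range.1 hj).le]]
            simp
          · simp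
  have hright : ∑ j ∈ range n, 1 / ((n - j : ℕ) : ℝ) = harmonic n := by
    rw [cast_harmonic, ← sum_range_reflect]
    refine sum_congr rfl fun j hj => ?_
    rw [show n - (n - 1 - j) = j + 1 by have := mem_range.1 hj; omega]
    push_cast
    ring
  calc ∑ j ∈ range i, dist (shiftZ^[j] x) (shiftZ^[j] y)
      ≤ ∑ j ∈ range n, dist (shiftZ^[j] x) (shiftZ^[j] y) :=
        sum_le_sum_of_subset_of_nonneg (range_subset_range.2 hi) fun _ _ _ => dist_nonneg
    _ ≤ ∑ j ∈ range n, (1 / (((j - b : ℕ) : ℝ) + 1) + 1 / ((n - j : ℕ) : ℝ)) :=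
        sum_le_sum fun j hj => dist_shiftZ_iterate_le hdist hxy (mem_range.1 hj)
    _ ≤ b + 2 * harmonic n := by rw [sum_add_distrib, hright]; linarith

end Disagreements

lemma sum_dist_blockPoint_le (s s' : Set ℕ) (k : ℕ) {i : ℕ} (hi : i ≤ blockStart (k + 1)) :
    ∑ j ∈ range i, dist (shiftZ^[j] (blockPoint s)) (shiftZ^[j] (blockPoint s')) ≤
      4 * Real.log (blockStart (k + 1)) := by
  have hlog := blockEnd_le_log_blockStart_succ k
  have h2 : (2 : ℝ) ≤ blockEnd k := by exact_mod_cast two_le_blockEnd k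
  calc _ ≤ blockEnd k + 2 * (harmonic (blockStart (k + 1)) : ℝ) :=
        sum_dist_shiftZ_iterate_le hdist (fun m hm => mem_Ico_or_le_of_blockPoint_ne hm k) hi
    _ ≤ blockEnd k + 2 * (1 + Real.log (blockStart (k + 1))) := by
        gcongr; exact harmonic_le_one_add_log _
    _ ≤ _ := by linarith

lemma PhiN_blockPoint_le {s s' : Set ℕ} {k : ℕ} (hk : ¬(k.unpair.1 ∈ s ↔ k.unpair.1 ∈ s')) :
    PhiN shiftZ (blockPoint s) (blockPoint s') 1 (blockEnd k) ≤ 1 / (k + 2) := by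
  refine (PhiN_le_of_forall_Ico _ _ _ _ (blockStart k) _ fun i hi => ?_).trans_eq ?_
  · have hm : (i : ℤ) ∈ block k := by
      simp only [mem_Ico] at hi
      simp only [block, Set.mem_Ico]
      omega
    have hne : shiftZ^[i] (blockPoint s) 0 ≠ shiftZ^[i] (blockPoint s') 0 := by
      rw [shiftZ_iterate_apply, shiftZ_iterate_apply, zero_add]
      exact blockPoint_ne_of_mem_block hm hk
    simpa using one_div_abs_add_one_le_dist hdist hne
  · have := blockStart_pos k
    rw [blockEnd]
    push_cast
    field_simp

/-- Up to time `n = blockStart (k + 1)` the orbit sums are at most `4 log n`, which is less than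
`8 log i` as soon as `i > √n`. -/
lemma PhiSupA_blockPoint_eq_one {α : ℕ → ℝ}
    (hα : Tendsto (fun n : ℕ => α n / Real.log n) atTop atTop) (s s' : Set ℕ) {t : ℝ}
    (ht : 0 < t) : PhiSupA shiftZ (blockPoint s) (blockPoint s') t α = 1 := by
  obtain ⟨N, hN⟩ : ∃ N : ℕ, ∀ i ≥ N, 8 * Real.log i ≤ α i * t := by
    obtain ⟨N, hN⟩ := eventually_atTop.1 (hα.eventually_ge_atTop (8 / t))
    refine ⟨max N 2, fun i hi => ?_⟩
    have hlog : 0 < Real.log i := Real.log_pos (by exact_mod_cast (show 1 < i by omega))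
    have := hN i ((le_max_left N 2).trans hi)
    rwa [div_le_div_iff₀ ht hlog] at this
  have hu : Tendsto (fun k => blockStart (k + 1)) atTop atTop :=
    blockStart_strictMono.tendsto_atTop.comp (tendsto_add_atTop_nat 1)
  refine PhiSupA_eq_one_of_tendsto _ _ _ _ α hu ?_
  refine tendsto_of_tendsto_of_tendsto_of_le_of_le' (tendsto_sub_nat_sqrt_div_self.comp hu)
    tendsto_const_nhds ?_ (.of_forall fun k => PhiNA_le_one _ _ _ _ α _)
  filter_upwards [(tendsto_nat_sqrt_atTop.comp hu).eventually_ge_atTop N] with k hk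
  refine sub_div_le_PhiNA _ _ _ _ α _ _ fun i hi => ?_
  set n := blockStart (k + 1)
  obtain ⟨hsi, hin⟩ := mem_Ioc.1 hi
  have hi0 : (0 : ℝ) < i := by exact_mod_cast (Nat.zero_le _).trans_lt hsi
  have hlog : Real.log n < 2 * Real.log i := by
    have : (n : ℝ) < i * i := by
      exact_mod_cast (Nat.lt_succ_sqrt n).trans_le (Nat.mul_le_mul hsi hsi)
    rw [two_mul, ← Real.log_mul hi0.ne' hi0.ne']
    exact Real.log_lt_log (Nat.cast_pos.2 (blockStart_pos _)) this
  calc _ ≤ 4 * Real.log n := sum_dist_blockPoint_le hdist s s' k hin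
    _ < 8 * Real.log i := by linarith
    _ ≤ α i * t := hN i (hk.trans hsi.le)

theorem blockPoint_ADC1Scrambled {α : ℕ → ℝ}
    (hα : Tendsto (fun n : ℕ => α n / Real.log n) atTop atTop) {s s' : Set ℕ} (hne : s ≠ s') :
    ADC1Scrambled shiftZ α (blockPoint s) (blockPoint s') := by
  obtain ⟨i, hi⟩ : ∃ i, ¬(i ∈ s ↔ i ∈ s') := by simpa [Set.ext_iff] using hne
  have hpair : Tendsto (Nat.pair i) atTop atTop :=
    tendsto_atTop_mono (Nat.right_le_pair i) tendsto_id
  refine ⟨⟨1, one_pos, PhiInf_eq_zero_of_tendsto _ _ _ _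
    (blockEnd_strictMono.tendsto_atTop.comp hpair) ?_⟩,
    fun t ht => PhiSupA_blockPoint_eq_one hdist hα s s' ht⟩
  refine squeeze_zero (fun _ => PhiN_nonneg _ _ _ _ _)
    (fun N => PhiN_blockPoint_le hdist (k := Nat.pair i N) (by rwa [Nat.unpair_pair])) ?_
  exact (tendsto_const_nhds.div_atTop
    (tendsto_atTop_add_const_right _ 2 tendsto_natCast_atTop_atTop)).comp hpair

end ShiftMetric

theorem twoSided_shift_alphaDC1
    [MetricSpace (ℤ → Fin 2)]
    (hdist : ∀ ω γ : ℤ → Fin 2, ω ≠ γ →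
      dist ω γ = sSup {r : ℝ | ∃ n : ℤ, ω n ≠ γ n ∧ r = 1 / (|(n : ℝ)| + 1)}) :
    (∀ α : ℕ → ℝ, MemA α →
      (Filter.IsBoundedUnder (· ≤ ·) Filter.atTop fun n : ℕ => α n / Real.log n) →
      ∀ x y : ℤ → Fin 2, ¬ ADC1Scrambled shiftZ α x y) ∧
    (∀ α : ℕ → ℝ, MemA α →
      Tendsto (fun n : ℕ => α n / Real.log n) atTop atTop →
      ∃ S : Set (ℤ → Fin 2), ¬ S.Countable ∧
        ∀ x ∈ S, ∀ y ∈ S, x ≠ y → ADC1Scrambled shiftZ α x y) := by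
  refine ⟨fun α _ hbd => not_ADC1Scrambled_shiftZ hdist hbd, fun α _ hα => ?_⟩
  refine ⟨Set.range blockPoint, not_countable_range_blockPoint, ?_⟩
  rintro _ ⟨s, rfl⟩ _ ⟨s', rfl⟩ hne
  exact blockPoint_ADC1Scrambled hdist hα (ne_of_apply_ne blockPoint hne)
end
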